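/- arXiv:2104.12484 — 9 statements merged into one kernel-verified Lean document; each statement's English description precedes it below -/
import Mathlib

section
/- The ListFold probability with exponential transformation is a probability distribution on the permutation space: for 2n fixed real scores f_1,...,f_{2n}, the sum over all permutations π of ∏_{i=1}^{n} exp(f_{π(i)} - f_{π(2n+1-i)}) / (Σ_{i ≤ u ≠ v ≤ 2n+1-i} exp(f_{π(u)} - f_{π(v)})) equals 1. -/
open Finset

noncomputable def escore {β : Type} (k : ℕ) (f : β → ℝ) (e : Fin k ↪ β) (j : ℕ) : ℝ :=
  if h : j < k then f (e ⟨j, h⟩) else 0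

/-- the middle part of an embedding from `Fin (2m+2)`. -/
def midEmb {β : Type} (m : ℕ) (e : Fin (2*m+2) ↪ β) : Fin (2*m) ↪ β :=
  ⟨fun j => e ⟨j.val+1, by omega⟩, fun j k h => by
    have := e.injective h
    rw [Fin.mk.injEq] at this
    exact Fin.ext (by omega)⟩

/-- glue a pair and a middle embedding into an embedding from `Fin (2m+2)`. -/
def joinEmb {β : Type} (m : ℕ) (a b : β) (hab : a ≠ b) (g : Fin (2*m) ↪ β)
    (hg : ∀ j, g j ≠ a ∧ g j ≠ b) : Fin (2*m+2) ↪ β :=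
  ⟨fun j => if h0 : j.val = 0 then a else if hl : j.val = 2*m+1 then b
    else g ⟨j.val - 1, by omega⟩, by
    intro j k h
    dsimp only at h
    split_ifs at h <;>
      first
        | exact Fin.ext (by omega)
        | exact absurd h hab
        | exact absurd h.symm hab
        | exact absurd h (hg _).1
        | exact absurd h (hg _).2
        | exact absurd h.symm (hg _).1
        | exact absurd h.symm (hg _).2
        | (have := g.injective h
           rw [Fin.mk.injEq] at this
           exact Fin.ext (by omega))⟩

lemma escore_mid {β : Type} (m : ℕ) (f : β → ℝ) (e : Fin (2*m+2) ↪ β) (j : ℕ)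
    (hj : j < 2*m) : escore (2*m+2) f e (j+1) = escore (2*m) f (midEmb m e) j := by
  simp only [escore, midEmb, dif_pos (by omega : j+1 < 2*m+2), dif_pos hj,
    Function.Embedding.coeFn_mk]
  rfl

lemma denom_shift {β : Type} (m : ℕ) (f : β → ℝ) (e : Fin (2*m+2) ↪ β) (i : ℕ) (hi : i < m) :
    (∑ u ∈ Icc (i+1) (2*m-i), ∑ v ∈ Icc (i+1) (2*m-i),
      if u ≠ v then Real.exp (escore (2*m+2) f e u - escore (2*m+2) f e v) else 0)
    = ∑ u ∈ Icc i (2*m-1-i), ∑ v ∈ Icc i (2*m-1-i),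
        if u ≠ v then Real.exp (escore (2*m) f (midEmb m e) u - escore (2*m) f (midEmb m e) v)
          else 0 := by
  rw [show Icc (i+1) (2*m-i) = (Icc i (2*m-1-i)).map (addRightEmbedding 1) by
    rw [Finset.map_add_right_Icc]; congr 1; omega]
  rw [Finset.sum_map]
  refine Finset.sum_congr rfl fun u hu => ?_
  rw [Finset.sum_map]
  refine Finset.sum_congr rfl fun v hv => ?_
  rw [mem_Icc] at hu hv
  simp only [addRightEmbedding_apply]
  rw [escore_mid m f e u (by omega), escore_mid m f e v (by omega)]
  congr 1
  simp [Ne, Nat.add_right_cancel_iff]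

lemma sum_escore_pairs {β : Type} [Fintype β] [DecidableEq β] (m : ℕ) (f : β → ℝ)
    (hcard : Fintype.card β = 2*m+2) (e : Fin (2*m+2) ↪ β) :
    (∑ u ∈ Icc 0 (2*m+1), ∑ v ∈ Icc 0 (2*m+1),
      if u ≠ v then Real.exp (escore (2*m+2) f e u - escore (2*m+2) f e v) else 0)
    = ∑ x : β, ∑ y : β, if x ≠ y then Real.exp (f x - f y) else 0 := by
  have hbij : Function.Bijective e :=
    (Fintype.bijective_iff_injective_and_card e).mpr ⟨e.injective, by simp [hcard]⟩
  have hIcc : Icc 0 (2*m+1) = range (2*m+2) := by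
    ext x; simp [Nat.lt_succ_iff]
  have he : ∀ u : Fin (2*m+2), escore (2*m+2) f e u.val = f (e u) := fun u => by
    simp only [escore, dif_pos u.isLt, Fin.eta]
  rw [hIcc]
  rw [← Fin.sum_univ_eq_sum_range (fun u => ∑ v ∈ range (2*m+2),
    if u ≠ v then Real.exp (escore (2*m+2) f e u - escore (2*m+2) f e v) else 0) (2*m+2)]
  refine Fintype.sum_equiv (Equiv.ofBijective e hbij) _ _ fun u => ?_
  rw [← Fin.sum_univ_eq_sum_range (fun v =>
    if (u:ℕ) ≠ v then Real.exp (escore (2*m+2) f e u - escore (2*m+2) f e v) else 0) (2*m+2)]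
  refine Fintype.sum_equiv (Equiv.ofBijective e hbij) _ _ fun v => ?_
  simp only [ne_eq, Equiv.ofBijective_apply, he]
  congr 1
  simp [Fin.val_inj, e.injective.eq_iff]

theorem keyLemma (m : ℕ) : ∀ (β : Type) [Fintype β] [DecidableEq β] (f : β → ℝ),
    Fintype.card β = 2*m →
    ∑ e : Fin (2*m) ↪ β, ∏ i ∈ Finset.range m,
      Real.exp (escore (2*m) f e i - escore (2*m) f e (2*m-1-i)) /
        (∑ u ∈ Finset.Icc i (2*m-1-i), ∑ v ∈ Finset.Icc i (2*m-1-i),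
          if u ≠ v then Real.exp (escore (2*m) f e u - escore (2*m) f e v) else 0) = 1 := by
  induction m with
  | zero =>
    intro β _ _ f hcard
    simp [Fintype.card_embedding_eq]
  | succ m ih =>
    intro β _ _ f hcard
    have hcard' : Fintype.card β = 2*m+2 := by omega
    set D : ℝ := ∑ x : β, ∑ y : β, if x ≠ y then Real.exp (f x - f y) else 0 with hD
    have hDpos : 0 < D := by
      obtain ⟨a, b, hab⟩ := Fintype.exists_pair_of_one_lt_card (α := β) (by omega)
      refine Finset.sum_pos' (fun x _ => Finset.sum_nonneg fun y _ => by positivity)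
        ⟨a, mem_univ a, Finset.sum_pos' (fun y _ => by positivity)
          ⟨b, mem_univ b, by rw [if_pos hab]; positivity⟩⟩
    have hinner : ∀ (a b : β), a ≠ b →
        (∑ g ∈ (univ : Finset (Fin (2*m) ↪ β)).filter
            (fun g => ∀ j, g j ≠ a ∧ g j ≠ b),
          ∏ i ∈ Finset.range m,
            Real.exp (escore (2*m) f g i - escore (2*m) f g (2*m-1-i)) /
              (∑ u ∈ Finset.Icc i (2*m-1-i), ∑ v ∈ Finset.Icc i (2*m-1-i),
                if u ≠ v then Real.exp (escore (2*m) f g u - escore (2*m) f g v) else 0)) = 1 := by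
      intro a b hab
      have hsub : Fintype.card {x : β // x ≠ a ∧ x ≠ b} = 2*m := by
        rw [Fintype.card_subtype]
        have h1 : (univ.filter fun x : β => x ≠ a ∧ x ≠ b) = univ \ {a, b} := by
          ext x; simp [not_or]
        rw [h1, card_sdiff_of_subset (subset_univ _), Finset.card_pair hab, card_univ]
        omega
      have h2 := ih {x : β // x ≠ a ∧ x ≠ b} (fun x => f x.val) hsub
      rw [← h2]
      refine Finset.sum_bij'
        (fun g hg => ⟨fun j => ⟨g j, ((mem_filter.mp hg).2 j)⟩,
          fun j k h => g.injective (congrArg Subtype.val h)⟩)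
        (fun g' _ => ⟨fun j => (g' j).val, fun j k h => g'.injective (Subtype.ext h)⟩)
        (fun g hg => mem_univ _)
        (fun g' _ => mem_filter.mpr ⟨mem_univ _, fun j => (g' j).2⟩)
        (fun g hg => by ext j; rfl)
        (fun g' _ => by ext j; rfl)
        (fun g hg => ?_)
      rfl
    calc ∑ e : Fin (2*m+2) ↪ β, ∏ i ∈ Finset.range (m+1),
          Real.exp (escore (2*m+2) f e i - escore (2*m+2) f e (2*m+1-i)) /
            (∑ u ∈ Finset.Icc i (2*m+1-i), ∑ v ∈ Finset.Icc i (2*m+1-i),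
              if u ≠ v then Real.exp (escore (2*m+2) f e u - escore (2*m+2) f e v) else 0)
        = ∑ t ∈ (univ : Finset ({p : β × β // p.1 ≠ p.2} × (Fin (2*m) ↪ β))).filter
            (fun t => ∀ j, t.2 j ≠ t.1.1.1 ∧ t.2 j ≠ t.1.1.2),
            Real.exp (f t.1.1.1 - f t.1.1.2) / D *
              ∏ i ∈ Finset.range m,
                Real.exp (escore (2*m) f t.2 i - escore (2*m) f t.2 (2*m-1-i)) /
                  (∑ u ∈ Finset.Icc i (2*m-1-i), ∑ v ∈ Finset.Icc i (2*m-1-i),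
                    if u ≠ v then Real.exp (escore (2*m) f t.2 u - escore (2*m) f t.2 v)
                      else 0) := by
          refine Finset.sum_bij'
            (fun (e : Fin (2*m+2) ↪ β) (_ : e ∈ univ) =>
              ((⟨(e ⟨0, by omega⟩, e ⟨2*m+1, by omega⟩), fun h => by
                  have := e.injective h; rw [Fin.mk.injEq] at this; omega⟩ :
                {p : β × β // p.1 ≠ p.2}), midEmb m e))
            (fun t ht => joinEmb m t.1.1.1 t.1.1.2 t.1.2 t.2 (mem_filter.mp ht).2)
            (fun e _ => ?_) (fun t _ => mem_univ _) (fun e _ => ?_) (fun t ht => ?_)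
            (fun e _ => ?_)
          · simp only [mem_filter, mem_univ, true_and]
            intro j
            refine ⟨fun h => ?_, fun h => ?_⟩ <;>
            · simp only [midEmb, Function.Embedding.coeFn_mk] at h
              have := e.injective h
              rw [Fin.mk.injEq] at this
              omega
          · ext j
            simp only [joinEmb, midEmb, Function.Embedding.coeFn_mk]
            split_ifs with h0 hl
            · congr 1; exact Fin.ext (by simp only [Fin.val_mk]; omega)
            · congr 1; exact Fin.ext (by simp only [Fin.val_mk]; omega)
            · show e ⟨(j:ℕ) - 1 + 1, by omega⟩ = e j
              congr 1; exact Fin.ext (by simp only [Fin.val_mk]; omega)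
          · obtain ⟨⟨⟨a, b⟩, hab⟩, g⟩ := t
            refine Prod.ext (Subtype.ext (Prod.ext ?_ ?_)) ?_
            · simp [joinEmb]
            · simp only [joinEmb, Function.Embedding.coeFn_mk]
              rw [dif_neg (by omega)]
              simp
            · ext j
              simp only [midEmb, joinEmb, Function.Embedding.coeFn_mk]
              rw [dif_neg (by omega), dif_neg (by have := j.isLt; omega)]
              congr 1
          · rw [Finset.prod_range_succ', mul_comm]
            congr 1
            · show Real.exp (escore (2*m+2) f e 0 - escore (2*m+2) f e (2*m+1)) /
                  (∑ u ∈ Icc 0 (2*m+1), ∑ v ∈ Icc 0 (2*m+1),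
                    if u ≠ v then Real.exp (escore (2*m+2) f e u - escore (2*m+2) f e v)
                      else 0)
                = Real.exp (f (e ⟨0, by omega⟩) - f (e ⟨2*m+1, by omega⟩)) / D
              rw [sum_escore_pairs m f hcard' e]
              have e1 : escore (2*m+2) f e 0 = f (e ⟨0, by omega⟩) := by
                simp only [escore]; rw [dif_pos (show (0:ℕ) < 2*m+2 by omega)]
              have e2 : escore (2*m+2) f e (2*m+1) = f (e ⟨2*m+1, by omega⟩) := by
                simp only [escore]; rw [dif_pos (show 2*m+1 < 2*m+2 by omega)]
              rw [e1, e2, hD]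
            · refine Finset.prod_congr rfl fun i hi => ?_
              rw [mem_range] at hi
              show Real.exp (escore (2*m+2) f e (i+1) - escore (2*m+2) f e (2*m+1-(i+1))) /
                  (∑ u ∈ Icc (i+1) (2*m+1-(i+1)), ∑ v ∈ Icc (i+1) (2*m+1-(i+1)),
                    if u ≠ v then Real.exp (escore (2*m+2) f e u - escore (2*m+2) f e v)
                      else 0)
                = Real.exp (escore (2*m) f (midEmb m e) i -
                      escore (2*m) f (midEmb m e) (2*m-1-i)) /
                    (∑ u ∈ Icc i (2*m-1-i), ∑ v ∈ Icc i (2*m-1-i),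
                      if u ≠ v then Real.exp (escore (2*m) f (midEmb m e) u -
                        escore (2*m) f (midEmb m e) v) else 0)
              rw [show 2*m+1-(i+1) = 2*m-i from by omega]
              rw [denom_shift m f e i hi]
              rw [escore_mid m f e i (by omega)]
              rw [show 2*m-i = 2*m-1-i+1 from by omega]
              rw [escore_mid m f e (2*m-1-i) (by omega)]
      _ = ∑ p : {p : β × β // p.1 ≠ p.2},
            Real.exp (f p.1.1 - f p.1.2) / D *
              ∑ g ∈ (univ : Finset (Fin (2*m) ↪ β)).filter
                  (fun g => ∀ j, g j ≠ p.1.1 ∧ g j ≠ p.1.2),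
                ∏ i ∈ Finset.range m,
                  Real.exp (escore (2*m) f g i - escore (2*m) f g (2*m-1-i)) /
                    (∑ u ∈ Finset.Icc i (2*m-1-i), ∑ v ∈ Finset.Icc i (2*m-1-i),
                      if u ≠ v then Real.exp (escore (2*m) f g u - escore (2*m) f g v)
                        else 0) := by
          rw [Finset.sum_filter, Fintype.sum_prod_type]
          refine Finset.sum_congr rfl fun p _ => ?_
          rw [Finset.mul_sum, Finset.sum_filter]
      _ = ∑ p : {p : β × β // p.1 ≠ p.2}, Real.exp (f p.1.1 - f p.1.2) / D := by
          refine Finset.sum_congr rfl fun p _ => ?_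
          rw [hinner p.1.1 p.1.2 p.2, mul_one]
      _ = 1 := by
          rw [← Finset.sum_div, div_eq_one_iff_eq hDpos.ne', hD]
          rw [show (∑ x : β, ∑ y : β, if x ≠ y then Real.exp (f x - f y) else 0)
              = ∑ t : β × β, if t.1 ≠ t.2 then Real.exp (f t.1 - f t.2) else 0 from
            (Fintype.sum_prod_type (fun t : β × β => if t.1 ≠ t.2 then Real.exp (f t.1 - f t.2) else 0)).symm]
          rw [← Finset.sum_filter]
          exact (Finset.sum_bij'
            (fun t ht => (⟨t, (mem_filter.mp ht).2⟩ : {p : β × β // p.1 ≠ p.2}))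
            (fun p _ => p.val) (fun t ht => mem_univ _)
            (fun p _ => mem_filter.mpr ⟨mem_univ _, p.2⟩)
            (fun t ht => rfl) (fun p _ => rfl) (fun t ht => rfl)).symm

/-- The score at (0-based) position `j` under arrangement `π` of the scores `f`. -/
noncomputable def listFoldScore (n : ℕ) (f : Fin (2*n) → ℝ)
    (π : Equiv.Perm (Fin (2*n))) (j : ℕ) : ℝ :=
  if h : j < 2*n then f (π ⟨j, h⟩) else 0

/-- The ListFold probability with exponential transformation sums to 1 over all permutations.
(Positions are 0-based: position `i` is paired with position `2n-1-i`, and at step `i` the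
remaining positions are `i ≤ u,v ≤ 2n-1-i`.) -/
theorem listFold_exp_prob_sums_to_one (n : ℕ) (hn : 0 < n) (f : Fin (2*n) → ℝ) :
    ∑ π : Equiv.Perm (Fin (2*n)),
      ∏ i ∈ Finset.range n,
        Real.exp (listFoldScore n f π i - listFoldScore n f π (2*n-1-i)) /
          (∑ u ∈ Finset.Icc i (2*n-1-i), ∑ v ∈ Finset.Icc i (2*n-1-i),
            if u ≠ v then Real.exp (listFoldScore n f π u - listFoldScore n f π v) else 0)
      = 1 := by
  have h := keyLemma n (Fin (2*n)) f (by simp)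
  refine Eq.trans ?_ h
  refine Fintype.sum_bijective (fun π : Equiv.Perm (Fin (2*n)) => π.toEmbedding)
    ⟨?_, ?_⟩ _ _ fun π => ?_
  · intro π σ hh
    ext x
    exact congrArg Fin.val (DFunLike.congr_fun hh x)
  · intro e
    exact ⟨e.equivOfFiniteSelfEmbedding, e.toEmbedding_equivOfFiniteSelfEmbedding⟩
  · rfl
end

section
/- Pairing inequality for convex losses: for real numbers f_i ≤ f_j ≤ f_k ≤ f_l, log(1+e^{-(f_l-f_j)}) + log(1+e^{-(f_k-f_i)}) ≤ log(1+e^{-(f_l-f_i)}) + log(1+e^{-(f_k-f_j)}). -/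
/-- Pairing inequality for the convex decreasing loss `x ↦ log (1 + e^{-x})`:
for `fi ≤ fj ≤ fk ≤ fl`, pairing `(fl,fj)` and `(fk,fi)` gives smaller loss than
pairing `(fl,fi)` and `(fk,fj)`. -/
theorem pairing_inequality_convexity (fi fj fk fl : ℝ)
    (h1 : fi ≤ fj) (h2 : fj ≤ fk) (h3 : fk ≤ fl) :
    Real.log (1 + Real.exp (-(fl - fj))) + Real.log (1 + Real.exp (-(fk - fi)))
      ≤ Real.log (1 + Real.exp (-(fl - fi))) + Real.log (1 + Real.exp (-(fk - fj))) := by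
  have e1 : Real.exp (-(fl - fj)) = Real.exp (-fl) * Real.exp fj := by
    rw [← Real.exp_add]; ring_nf
  have e2 : Real.exp (-(fk - fi)) = Real.exp (-fk) * Real.exp fi := by
    rw [← Real.exp_add]; ring_nf
  have e3 : Real.exp (-(fl - fi)) = Real.exp (-fl) * Real.exp fi := by
    rw [← Real.exp_add]; ring_nf
  have e4 : Real.exp (-(fk - fj)) = Real.exp (-fk) * Real.exp fj := by
    rw [← Real.exp_add]; ring_nf
  rw [← Real.log_mul (by positivity) (by positivity),
      ← Real.log_mul (by positivity) (by positivity)]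
  apply Real.log_le_log (by positivity)
  rw [e1, e2, e3, e4]
  have hab : Real.exp (-fl) ≤ Real.exp (-fk) := Real.exp_le_exp.mpr (by linarith)
  have hcd : Real.exp fi ≤ Real.exp fj := Real.exp_le_exp.mpr h1
  nlinarith [Real.exp_pos (-fl), Real.exp_pos (-fk), Real.exp_pos fi, Real.exp_pos fj,
    mul_nonneg (sub_nonneg.mpr hab) (sub_nonneg.mpr hcd)]
end

section
/- Pairing inequality (second form): for real numbers f_i ≤ f_j ≤ f_k ≤ f_l, log(1+e^{-(f_l-f_j)}) + log(1+e^{-(f_k-f_i)}) ≤ log(1+e^{-(f_l-f_k)}) + log(1+e^{-(f_j-f_i)}). -/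
/-- Pairing inequality (second form) for the convex decreasing loss `x ↦ log (1 + e^{-x})`:
for `fi ≤ fj ≤ fk ≤ fl`, pairing `(fl,fj)` and `(fk,fi)` gives smaller loss than
pairing `(fl,fk)` and `(fj,fi)`. -/
theorem pairing_inequality_monotonicity (fi fj fk fl : ℝ)
    (h1 : fi ≤ fj) (h2 : fj ≤ fk) (h3 : fk ≤ fl) :
    Real.log (1 + Real.exp (-(fl - fj))) + Real.log (1 + Real.exp (-(fk - fi)))
      ≤ Real.log (1 + Real.exp (-(fl - fk))) + Real.log (1 + Real.exp (-(fj - fi))) := by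
  have key : ∀ x y : ℝ, x ≤ y →
      Real.log (1 + Real.exp (-y)) ≤ Real.log (1 + Real.exp (-x)) := by
    intro x y hxy
    apply Real.log_le_log (by positivity)
    have := Real.exp_le_exp.mpr (neg_le_neg hxy)
    linarith
  have a := key (fl - fk) (fl - fj) (by linarith)
  have b := key (fj - fi) (fk - fi) (by linarith)
  linarith
end

section
/- ListFold-exp decomposition: for 2n+2 real numbers, the loss satisfies L([α, f_1,...,f_n, f_{-n},...,f_{-1}, β]) = -(α - β) + log(Σ_{s≠t ∈ S∪{α,β}} e^{f_s - f_t}) + L([f_1,...,f_n, f_{-n},...,f_{-1}]), where S = {f_1,...,f_n, f_{-n},...,f_{-1}} and the first two terms depend only on α, β and the multiset S, not on the ordering of S. -/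
/-- The ListFold-exp loss of an arrangement `(g 1, …, g m, g (-m), …, g (-1))`:
`L = Σ_{i=1}^{m} [ -(g i - g (-i)) + log Σ_{s ≠ t, |s|,|t| ≥ i} e^{g s - g t} ]`. -/
noncomputable def listFoldExpLoss (m : ℕ) (g : ℤ → ℝ) : ℝ :=
  ∑ i ∈ Finset.Icc (1 : ℤ) (m : ℤ),
    (-(g i - g (-i)) +
      Real.log (∑ s ∈ Finset.Icc i (m : ℤ) ∪ Finset.Icc (-(m : ℤ)) (-i),
        ∑ t ∈ Finset.Icc i (m : ℤ) ∪ Finset.Icc (-(m : ℤ)) (-i),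
          if s ≠ t then Real.exp (g s - g t) else 0))

/-- ListFold-exp decomposition: prepending `α` and appending `β` to an arrangement
`(f_1,…,f_n,f_{-n},…,f_{-1})` gives
`L([α,f…,β]) = -(α-β) + log Σ_{s ≠ t ∈ S ∪ {α,β}} e^{f_s - f_t} + L([f…])`,
where the middle term sums over all (ordered, distinct) pairs of positions and hence
depends only on `α`, `β` and the multiset of inner values. -/
theorem listFold_exp_decomposition (n : ℕ) (α β : ℝ) (g : ℤ → ℝ) :
    let g' : ℤ → ℝ := fun s =>
      if s = 1 then α else if s = -1 then β else if 0 < s then g (s - 1) else g (s + 1)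
    let D : Finset ℤ := Finset.Icc (1 : ℤ) ((n : ℤ) + 1) ∪ Finset.Icc (-((n : ℤ) + 1)) (-1)
    listFoldExpLoss (n + 1) g'
      = -(α - β)
        + Real.log (∑ s ∈ D, ∑ t ∈ D, if s ≠ t then Real.exp (g' s - g' t) else 0)
        + listFoldExpLoss n g := by
  intro g' D
  set φ : ℤ → ℤ := fun s => if 0 < s then s + 1 else s - 1 with hφ
  have hφinj : Function.Injective φ := by
    intro a b h
    simp only [hφ] at h
    split_ifs at h <;> omega
  have hg'φ : ∀ s : ℤ, s ≠ 0 → g' (φ s) = g s := by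
    intro s hs
    by_cases h : 0 < s
    · simp only [hφ, if_pos h, g']
      rw [if_neg (by omega), if_neg (by omega), if_pos (by omega)]
      norm_num
    · simp only [hφ, if_neg h, g']
      rw [if_neg (by omega), if_neg (by omega), if_neg (by omega)]
      norm_num
  have himg : ∀ i : ℤ, 1 ≤ i →
      (Finset.Icc i (n : ℤ) ∪ Finset.Icc (-(n : ℤ)) (-i)).image φ
        = Finset.Icc (i + 1) ((n : ℤ) + 1) ∪ Finset.Icc (-((n : ℤ) + 1)) (-(i + 1)) := by
    intro i hi
    ext x
    simp only [Finset.mem_image, Finset.mem_union, Finset.mem_Icc, hφ]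
    constructor
    · rintro ⟨s, hs, rfl⟩
      split_ifs <;> omega
    · intro hx
      by_cases hx0 : 0 < x
      · refine ⟨x - 1, by omega, ?_⟩
        rw [if_pos (by omega)]; ring
      · refine ⟨x + 1, by omega, ?_⟩
        rw [if_neg (by omega)]; ring
  have hterm : ∀ i ∈ Finset.Icc (1 : ℤ) (n : ℤ),
      (-(g' (i + 1) - g' (-(i + 1))) +
        Real.log (∑ s ∈ Finset.Icc (i + 1) ((n : ℤ) + 1) ∪ Finset.Icc (-((n : ℤ) + 1)) (-(i + 1)),
          ∑ t ∈ Finset.Icc (i + 1) ((n : ℤ) + 1) ∪ Finset.Icc (-((n : ℤ) + 1)) (-(i + 1)),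
            if s ≠ t then Real.exp (g' s - g' t) else 0))
      = (-(g i - g (-i)) +
        Real.log (∑ s ∈ Finset.Icc i (n : ℤ) ∪ Finset.Icc (-(n : ℤ)) (-i),
          ∑ t ∈ Finset.Icc i (n : ℤ) ∪ Finset.Icc (-(n : ℤ)) (-i),
            if s ≠ t then Real.exp (g s - g t) else 0)) := by
    intro i hi
    rw [Finset.mem_Icc] at hi
    have h1 : g' (i + 1) = g i := by
      have hh := hg'φ i (by omega)
      simp only [hφ, if_pos (show (0:ℤ) < i by omega)] at hh
      exact hh
    have h2 : g' (-(i + 1)) = g (-i) := by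
      have hh := hg'φ (-i) (by omega)
      simp only [hφ, if_neg (show ¬ (0:ℤ) < -i by omega)] at hh
      rw [show -(i + 1) = -i - 1 by ring]
      exact hh
    rw [h1, h2, ← himg i (by omega),
      Finset.sum_image (fun a _ b _ h => hφinj h)]
    congr 2
    refine Finset.sum_congr rfl fun s hs => ?_
    rw [Finset.sum_image (fun a _ b _ h => hφinj h)]
    refine Finset.sum_congr rfl fun t ht => ?_
    have hs0 : s ≠ 0 := by
      simp only [Finset.mem_union, Finset.mem_Icc] at hs; omega
    have ht0 : t ≠ 0 := by
      simp only [Finset.mem_union, Finset.mem_Icc] at ht; omega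
    rw [hg'φ s hs0, hg'φ t ht0]
    congr 1
    simp [hφinj.ne_iff]
  -- now split the main sum
  have hcast : ((n + 1 : ℕ) : ℤ) = (n : ℤ) + 1 := by push_cast; ring
  have hsplit : Finset.Icc (1 : ℤ) ((n : ℤ) + 1) = insert 1 (Finset.Icc 2 ((n : ℤ) + 1)) := by
    ext x
    simp only [Finset.mem_insert, Finset.mem_Icc]
    omega
  have himgIcc : (Finset.Icc (1 : ℤ) (n : ℤ)).image (· + 1) = Finset.Icc 2 ((n : ℤ) + 1) := by
    ext x
    simp only [Finset.mem_image, Finset.mem_Icc]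
    constructor
    · rintro ⟨s, hs, rfl⟩; omega
    · intro hx; exact ⟨x - 1, by omega, by ring⟩
  unfold listFoldExpLoss
  rw [hcast, hsplit, Finset.sum_insert (by simp), ← himgIcc,
    Finset.sum_image (fun a _ b _ h => by omega)]
  have h1 : g' 1 = α := by simp [g']
  have h2 : g' (-1) = β := by simp [g']
  rw [h1, h2, Finset.sum_congr rfl hterm]
end

section
/- For a finite set S of reals, an element a_k ∈ S and α with b_k ≤ α ≤ a_k (where all other elements of S lie between b_k and a_k), one has Σ_{f_s ∈ S∖{a_k}} [e^{α-f_s}(e^{a_k-α}-1) + e^{f_s-α}(e^{α-a_k}-1)] ≥ 0 whenever #{f_s ∈ S∖{a_k} : f_s ≤ α} ≥ #{f_s ∈ S∖{a_k} : f_s > α} and e^{α-f_s} ≥ 1 for f_s ≤ α, e^{α-f_s} ≥ e^{α-a_k} for f_s > α. -/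
/-- Replacing `a_k` by `α` (with `α ≤ a_k`) does not increase `ℓ(S)`: the key inequality
`Σ_{f_s ∈ S∖{a_k}} [e^{α-f_s}(e^{a_k-α}-1) + e^{f_s-α}(e^{α-a_k}-1)] ≥ 0`
holds whenever at least as many elements of `S ∖ {a_k}` are `≤ α` as are `> α`,
and every element exceeding `α` is at most `a_k`. -/
theorem replace_top_element_inequality {ι : Type*} [DecidableEq ι]
    (T : Finset ι) (f : ι → ℝ) (α ak : ℝ) (hαk : α ≤ ak)
    (hbound : ∀ s ∈ T, α < f s → f s ≤ ak)
    (hcount : (T.filter fun s => α < f s).card ≤ (T.filter fun s => f s ≤ α).card) :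
    0 ≤ ∑ s ∈ T,
      (Real.exp (α - f s) * (Real.exp (ak - α) - 1)
        + Real.exp (f s - α) * (Real.exp (α - ak) - 1)) := by
  set g : ι → ℝ := fun s =>
    Real.exp (α - f s) * (Real.exp (ak - α) - 1)
      + Real.exp (f s - α) * (Real.exp (α - ak) - 1) with hg
  set c : ℝ := Real.exp (ak - α) + Real.exp (α - ak) - 2 with hcdef
  have hprod : Real.exp (ak - α) * Real.exp (α - ak) = 1 := by
    rw [← Real.exp_add]; ring_nf; exact Real.exp_zero
  have hδ1 : 1 ≤ Real.exp (ak - α) := Real.one_le_exp (by linarith)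
  have hc0 : 0 ≤ c := by
    have h1 := Real.exp_pos (α - ak)
    nlinarith [sq_nonneg (Real.exp (ak - α) - 1)]
  have hfilter : T.filter (fun s => α < f s) = T.filter (fun s => ¬ f s ≤ α) := by
    apply Finset.filter_congr; intro s _; exact not_le.symm
  have hsplit := Finset.sum_filter_add_sum_filter_not T (fun s => f s ≤ α) g
  have h1 : (T.filter (fun s => f s ≤ α)).card • c ≤ ∑ s ∈ T.filter (fun s => f s ≤ α), g s := by
    apply Finset.card_nsmul_le_sum
    intro s hs
    simp only [Finset.mem_filter] at hs
    have h1 : 1 ≤ Real.exp (α - f s) := Real.one_le_exp (by linarith [hs.2])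
    have h2 : Real.exp (f s - α) ≤ 1 := Real.exp_le_one_iff.mpr (by linarith [hs.2])
    have h3 := Real.exp_pos (α - ak)
    have h4 : Real.exp (α - ak) ≤ 1 := Real.exp_le_one_iff.mpr (by linarith)
    simp only [hg, hcdef]
    nlinarith [mul_nonneg (by linarith : (0:ℝ) ≤ Real.exp (α - f s) - 1)
        (by linarith : (0:ℝ) ≤ Real.exp (ak - α) - 1),
      mul_nonneg (by linarith : (0:ℝ) ≤ 1 - Real.exp (f s - α))
        (by linarith : (0:ℝ) ≤ 1 - Real.exp (α - ak))]
  have h2 : (T.filter (fun s => ¬ f s ≤ α)).card • (-c)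
      ≤ ∑ s ∈ T.filter (fun s => ¬ f s ≤ α), g s := by
    apply Finset.card_nsmul_le_sum
    intro s hs
    simp only [Finset.mem_filter, not_le] at hs
    have hsk : f s ≤ ak := hbound s hs.1 hs.2
    have h1 : Real.exp (α - ak) ≤ Real.exp (α - f s) := Real.exp_le_exp.mpr (by linarith)
    have h2 : Real.exp (f s - α) ≤ Real.exp (ak - α) := Real.exp_le_exp.mpr (by linarith)
    have h3 := Real.exp_pos (α - ak)
    have h4 := Real.exp_pos (α - f s)
    have h5 := Real.exp_pos (f s - α)
    have h6 : Real.exp (α - ak) ≤ 1 := Real.exp_le_one_iff.mpr (by linarith)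
    simp only [hg, hcdef]
    nlinarith [mul_nonneg (by linarith : (0:ℝ) ≤ Real.exp (α - f s) - Real.exp (α - ak))
        (by linarith : (0:ℝ) ≤ Real.exp (ak - α) - 1),
      mul_nonneg (by linarith : (0:ℝ) ≤ Real.exp (ak - α) - Real.exp (f s - α))
        (by linarith : (0:ℝ) ≤ 1 - Real.exp (α - ak))]
  rw [← hsplit]
  have hcard : (T.filter (fun s => ¬ f s ≤ α)).card ≤ (T.filter (fun s => f s ≤ α)).card := by
    rw [← hfilter]; exact hcount
  have : ((T.filter (fun s => ¬ f s ≤ α)).card : ℝ) * c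
      ≤ ((T.filter (fun s => f s ≤ α)).card : ℝ) * c := by
    apply mul_le_mul_of_nonneg_right _ hc0
    exact_mod_cast hcard
  simp only [nsmul_eq_mul] at h1 h2
  linarith
end

section
/- ListFold-exp consistency (conditional version): let a_1 ≥ ... ≥ a_n ≥ b_n ≥ ... ≥ b_1. Among all arrangements f = (f_1,...,f_n, f_{-n},...,f_{-1}) where (f_1,...,f_n) is a permutation of {a_1,...,a_n} and (f_{-1},...,f_{-n}) is a permutation of {b_1,...,b_n}, the loss L(f) = Σ_{i=1}^{n} [ -(f_i - f_{-i}) + log Σ_{-i ≤ s ≠ t ≤ i} e^{f_s - f_t} ] achieves its minimum at the fully sorted arrangement f* = (a_1,...,a_n, b_n,...,b_1). -/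
open Finset Real


/-- Key exchange inequality. -/
lemma lf_key (x y : ℝ) (hxy : y ≤ x) (Ra Rb : Finset ℕ) (va vb : ℕ → ℝ)
    (hva : ∀ v ∈ Ra, va v ≤ x) (hvb : ∀ w ∈ Rb, vb w ≤ y)
    (hcard : Ra.card < Rb.card) :
    (∑ v ∈ Ra, Real.exp (va v)) + ∑ w ∈ Rb, Real.exp (vb w)
      ≤ Real.exp (x + y) * ((∑ v ∈ Ra, Real.exp (-va v)) + ∑ w ∈ Rb, Real.exp (-vb w)) := by
  have h1 : ∑ v ∈ Ra, (Real.exp (va v) - Real.exp (x+y) * Real.exp (-va v))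
      ≤ Ra.card * (Real.exp x - Real.exp y) := by
    rw [← nsmul_eq_mul]
    refine Finset.sum_le_card_nsmul _ _ _ ?_
    intro v hv
    have h2 : Real.exp (va v) ≤ Real.exp x := Real.exp_le_exp.2 (hva v hv)
    have h3 : Real.exp y ≤ Real.exp (x+y) * Real.exp (-va v) := by
      rw [← Real.exp_add]; exact Real.exp_le_exp.2 (by linarith [hva v hv])
    linarith
  have h2 : (Rb.card : ℝ) * (Real.exp x - Real.exp y)
      ≤ ∑ w ∈ Rb, (Real.exp (x+y) * Real.exp (-vb w) - Real.exp (vb w)) := by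
    rw [← nsmul_eq_mul]
    refine Finset.card_nsmul_le_sum _ _ _ ?_
    intro w hw
    have h3 : Real.exp (vb w) ≤ Real.exp y := Real.exp_le_exp.2 (hvb w hw)
    have h4 : Real.exp x ≤ Real.exp (x+y) * Real.exp (-vb w) := by
      rw [← Real.exp_add]; exact Real.exp_le_exp.2 (by linarith [hvb w hw])
    linarith
  have hc : (Ra.card : ℝ) + 1 ≤ Rb.card := by exact_mod_cast hcard
  have he : Real.exp y ≤ Real.exp x := Real.exp_le_exp.2 hxy
  have hra : (0:ℝ) ≤ Ra.card := Nat.cast_nonneg _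
  rw [Finset.sum_sub_distrib] at h1
  rw [Finset.sum_sub_distrib] at h2
  rw [← Finset.mul_sum] at h1 h2
  nlinarith [h1, h2]

noncomputable def lfF (a b : ℕ → ℝ) (S T : Finset ℕ) : ℝ :=
  ((∑ v ∈ S, Real.exp (a v)) + ∑ w ∈ T, Real.exp (b w)) *
  ((∑ v ∈ S, Real.exp (-a v)) + ∑ w ∈ T, Real.exp (-b w))

lemma lf_swapA (a b : ℕ → ℝ) (S T : Finset ℕ) (x y : ℕ)
    (hx : x ∈ S) (hy : y ∉ S)
    (h1 : ∀ v ∈ S, a v ≤ a x) (h2 : a y ≤ a x)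
    (h3 : ∀ w ∈ T, b w ≤ a y) (hcard : S.card ≤ T.card) :
    lfF a b (insert y (S.erase x)) T ≤ lfF a b S T := by
  have hyx : y ∉ S.erase x := fun h => hy (Finset.mem_of_mem_erase h)
  set A' : ℝ := (∑ v ∈ S.erase x, Real.exp (a v)) + ∑ w ∈ T, Real.exp (b w) with hA'
  set B' : ℝ := (∑ v ∈ S.erase x, Real.exp (-a v)) + ∑ w ∈ T, Real.exp (-b w) with hB'
  have key : A' ≤ Real.exp (a x + a y) * B' :=
    lf_key (a x) (a y) h2 (S.erase x) T a b
      (fun v hv => h1 v (Finset.mem_of_mem_erase hv)) h3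
      (by have := Finset.card_pos.mpr ⟨x, hx⟩
          rw [Finset.card_erase_of_mem hx]; omega)
  have hL : lfF a b (insert y (S.erase x)) T
      = (Real.exp (a y) + A') * (Real.exp (-a y) + B') := by
    rw [lfF, Finset.sum_insert hyx, Finset.sum_insert hyx, hA', hB']; ring
  have hR : lfF a b S T = (Real.exp (a x) + A') * (Real.exp (-a x) + B') := by
    rw [lfF, ← Finset.add_sum_erase _ _ hx, ← Finset.add_sum_erase _ _ hx, hA', hB']; ring
  rw [hL, hR]
  have hid : (Real.exp (-a y) - Real.exp (-a x)) * Real.exp (a x + a y)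
      = Real.exp (a x) - Real.exp (a y) := by
    rw [sub_mul, ← Real.exp_add, ← Real.exp_add]; ring_nf
  have hc : 0 ≤ Real.exp (-a y) - Real.exp (-a x) := by
    have := Real.exp_le_exp.2 (neg_le_neg h2); linarith
  have hB'nn : 0 ≤ B' := by
    apply add_nonneg <;> exact Finset.sum_nonneg fun _ _ => (Real.exp_pos _).le
  have m1 := mul_le_mul_of_nonneg_left key hc
  have m2 : (Real.exp (-a y) - Real.exp (-a x)) * (Real.exp (a x + a y) * B')
      = (Real.exp (a x) - Real.exp (a y)) * B' := by rw [← mul_assoc, hid]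
  have p1 : Real.exp (a y) * Real.exp (-a y) = 1 := by
    rw [← Real.exp_add]; simp
  have p2 : Real.exp (a x) * Real.exp (-a x) = 1 := by
    rw [← Real.exp_add]; simp
  nlinarith [m1, m2, p1, p2]

lemma lf_swapB (a b : ℕ → ℝ) (S T : Finset ℕ) (w w' : ℕ)
    (hw : w ∈ T) (hw' : w' ∉ T)
    (h1 : ∀ v ∈ T, b w ≤ b v) (h2 : b w ≤ b w')
    (h3 : ∀ s ∈ S, b w' ≤ a s) (hcard : T.card ≤ S.card) :
    lfF a b S (insert w' (T.erase w)) ≤ lfF a b S T := by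
  have hww : w' ∉ T.erase w := fun h => hw' (Finset.mem_of_mem_erase h)
  set A' : ℝ := (∑ v ∈ S, Real.exp (a v)) + ∑ t ∈ T.erase w, Real.exp (b t) with hA'
  set B' : ℝ := (∑ v ∈ S, Real.exp (-a v)) + ∑ t ∈ T.erase w, Real.exp (-b t) with hB'
  have key : B' ≤ Real.exp (-b w + -b w') * A' := by
    have h0 := lf_key (-b w) (-b w') (neg_le_neg h2) (T.erase w) S
      (fun t => -b t) (fun s => -a s)
      (fun v hv => neg_le_neg (h1 v (Finset.mem_of_mem_erase hv)))
      (fun s hs => neg_le_neg (h3 s hs))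
      (by have := Finset.card_pos.mpr ⟨w, hw⟩
          rw [Finset.card_erase_of_mem hw]; omega)
    simp only [neg_neg] at h0
    calc B' = (∑ t ∈ T.erase w, Real.exp (-b t)) + ∑ v ∈ S, Real.exp (-a v) := by
            rw [hB']; ring
      _ ≤ Real.exp (-b w + -b w') *
            ((∑ t ∈ T.erase w, Real.exp (b t)) + ∑ v ∈ S, Real.exp (a v)) := h0
      _ = Real.exp (-b w + -b w') * A' := by rw [hA']; ring
  have hL : lfF a b S (insert w' (T.erase w))
      = (Real.exp (b w') + A') * (Real.exp (-b w') + B') := by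
    rw [lfF, Finset.sum_insert hww, Finset.sum_insert hww, hA', hB']; ring
  have hR : lfF a b S T = (Real.exp (b w) + A') * (Real.exp (-b w) + B') := by
    rw [lfF, ← Finset.add_sum_erase _ _ hw, ← Finset.add_sum_erase _ _ hw, hA', hB']; ring
  rw [hL, hR]
  have hid : (Real.exp (b w') - Real.exp (b w)) * Real.exp (-b w + -b w')
      = Real.exp (-b w) - Real.exp (-b w') := by
    rw [sub_mul, ← Real.exp_add, ← Real.exp_add]; ring_nf
  have hc : 0 ≤ Real.exp (b w') - Real.exp (b w) := by
    have := Real.exp_le_exp.2 h2; linarith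
  have hA'nn : 0 ≤ A' := by
    apply add_nonneg <;> exact Finset.sum_nonneg fun _ _ => (Real.exp_pos _).le
  have m1 := mul_le_mul_of_nonneg_left key hc
  have m2 : (Real.exp (b w') - Real.exp (b w)) * (Real.exp (-b w + -b w') * A')
      = (Real.exp (-b w) - Real.exp (-b w')) * A' := by rw [← mul_assoc, hid]
  have p1 : Real.exp (b w') * Real.exp (-b w') = 1 := by
    rw [← Real.exp_add]; simp
  have p2 : Real.exp (b w) * Real.exp (-b w) = 1 := by
    rw [← Real.exp_add]; simp
  nlinarith [m1, m2, p1, p2]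

lemma lf_min (n k : ℕ) (hk1 : 1 ≤ k) (hkn : k ≤ n) (a b : ℕ → ℝ)
    (ha : ∀ i j, i ≤ j → j < n → a j ≤ a i)
    (hb : ∀ i j, i ≤ j → j < n → b i ≤ b j)
    (hab : b (n-1) ≤ a (n-1)) :
    ∀ m (S T : Finset ℕ), S ⊆ Finset.range n → T ⊆ Finset.range n →
      S.card = k → T.card = k →
      (S \ Finset.Icc (n-k) (n-1)).card + (T \ Finset.Icc (n-k) (n-1)).card = m →
      lfF a b (Finset.Icc (n-k) (n-1)) (Finset.Icc (n-k) (n-1)) ≤ lfF a b S T := by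
  have hn1 : 1 ≤ n := le_trans hk1 hkn
  set I : Finset ℕ := Finset.Icc (n-k) (n-1) with hI
  have hIcard : I.card = k := by rw [hI, Nat.card_Icc]; omega
  have hIrange : I ⊆ Finset.range n := by
    intro z hz; rw [hI, Finset.mem_Icc] at hz; rw [Finset.mem_range]; omega
  intro m
  induction m using Nat.strong_induction_on with
  | _ m IH =>
    intro S T hS hT hSc hTc hm
    by_cases hSI : S = I
    · by_cases hTI : T = I
      · rw [hSI, hTI]
      · -- swap on T
        have hTne : (T \ I).Nonempty := by
          rw [Finset.sdiff_nonempty]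
          intro h
          exact hTI (Finset.eq_of_subset_of_card_le h (by omega))
        have hITne : (I \ T).Nonempty := by
          rw [Finset.sdiff_nonempty]
          intro h
          exact hTI (Finset.eq_of_subset_of_card_le h (by omega)).symm
        set w := (T \ I).min' hTne with hwdef
        set w' := (I \ T).min' hITne with hw'def
        have hwmem := Finset.min'_mem _ hTne
        have hw'mem := Finset.min'_mem _ hITne
        rw [Finset.mem_sdiff] at hwmem hw'mem
        have hwT : w ∈ T := hwmem.1
        have hwI : w ∉ I := hwmem.2
        have hw'I : w' ∈ I := hw'mem.1
        have hw'T : w' ∉ T := hw'mem.2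
        have hwn : w < n := Finset.mem_range.1 (hT hwT)
        have hwlt : w < n - k := by
          rw [hI, Finset.mem_Icc] at hwI; omega
        have hw'le : n - k ≤ w' ∧ w' ≤ n - 1 := by
          rw [hI, Finset.mem_Icc] at hw'I; exact hw'I
        have h1 : ∀ v ∈ T, b w ≤ b v := by
          intro v hv
          have hvn : v < n := Finset.mem_range.1 (hT hv)
          by_cases hvI : v ∈ I
          · rw [hI, Finset.mem_Icc] at hvI
            exact hb w v (by omega) hvn
          · have : w ≤ v := Finset.min'_le _ v (Finset.mem_sdiff.2 ⟨hv, hvI⟩)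
            exact hb w v this hvn
        have h2 : b w ≤ b w' := hb w w' (by omega) (by omega)
        have h3 : ∀ s ∈ I, b w' ≤ a s := by
          intro s hs
          rw [hI, Finset.mem_Icc] at hs
          calc b w' ≤ b (n-1) := hb w' (n-1) (by omega) (by omega)
            _ ≤ a (n-1) := hab
            _ ≤ a s := ha s (n-1) (by omega) (by omega)
        have hswap := lf_swapB a b I T w w' hwT hw'T h1 h2
          (fun s hs => h3 s hs) (by omega)
        set T' := insert w' (T.erase w) with hT'def
        have hw'e : w' ∉ T.erase w := fun h => hw'T (Finset.mem_of_mem_erase h)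
        have hT'c : T'.card = k := by
          rw [hT'def, Finset.card_insert_of_notMem hw'e,
            Finset.card_erase_of_mem hwT]
          have : 1 ≤ T.card := Finset.card_pos.2 ⟨w, hwT⟩
          omega
        have hT'r : T' ⊆ Finset.range n := by
          intro z hz
          rw [hT'def, Finset.mem_insert] at hz
          rcases hz with rfl | hz
          · exact hIrange hw'I
          · exact hT (Finset.mem_of_mem_erase hz)
        have hsd : T' \ I = (T \ I).erase w := by
          ext z
          simp only [hT'def, Finset.mem_sdiff, Finset.mem_insert, Finset.mem_erase]
          constructor
          · rintro ⟨rfl | ⟨hz1, hz2⟩, hzI⟩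
            · exact absurd hw'I hzI
            · exact ⟨hz1, hz2, hzI⟩
          · rintro ⟨hz1, hz2, hzI⟩
            exact ⟨Or.inr ⟨hz1, hz2⟩, hzI⟩
        have hmpos : 1 ≤ (T \ I).card := Finset.card_pos.2 hTne
        have hm' : (I \ I).card + (T' \ I).card = m - 1 := by
          rw [hsd, Finset.card_erase_of_mem (Finset.mem_sdiff.2 ⟨hwT, hwI⟩)]
          rw [hSI] at hm
          simp only [Finset.sdiff_self, Finset.card_empty] at hm ⊢
          omega
        have hmlt : m - 1 < m := by
          rw [hSI] at hm
          simp only [Finset.sdiff_self, Finset.card_empty] at hm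
          omega
        calc lfF a b I I ≤ lfF a b I T' :=
              IH (m-1) hmlt I T' hIrange hT'r hIcard hT'c hm'
          _ ≤ lfF a b I T := hswap
          _ = lfF a b S T := by rw [hSI]
    · -- swap on S
      have hSne : (S \ I).Nonempty := by
        rw [Finset.sdiff_nonempty]
        intro h
        exact hSI (Finset.eq_of_subset_of_card_le h (by omega))
      have hISne : (I \ S).Nonempty := by
        rw [Finset.sdiff_nonempty]
        intro h
        exact hSI (Finset.eq_of_subset_of_card_le h (by omega)).symm
      set x := (S \ I).min' hSne with hxdef
      set y := (I \ S).min' hISne with hydef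
      have hxmem := Finset.min'_mem _ hSne
      have hymem := Finset.min'_mem _ hISne
      rw [Finset.mem_sdiff] at hxmem hymem
      have hxS : x ∈ S := hxmem.1
      have hxI : x ∉ I := hxmem.2
      have hyI : y ∈ I := hymem.1
      have hyS : y ∉ S := hymem.2
      have hxn : x < n := Finset.mem_range.1 (hS hxS)
      have hxlt : x < n - k := by rw [hI, Finset.mem_Icc] at hxI; omega
      have hyle : n - k ≤ y ∧ y ≤ n - 1 := by
        rw [hI, Finset.mem_Icc] at hyI; exact hyI
      have h1 : ∀ v ∈ S, a v ≤ a x := by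
        intro v hv
        have hvn : v < n := Finset.mem_range.1 (hS hv)
        by_cases hvI : v ∈ I
        · rw [hI, Finset.mem_Icc] at hvI
          exact ha x v (by omega) hvn
        · have : x ≤ v := Finset.min'_le _ v (Finset.mem_sdiff.2 ⟨hv, hvI⟩)
          exact ha x v this hvn
      have h2 : a y ≤ a x := ha x y (by omega) (by omega)
      have h3 : ∀ w ∈ T, b w ≤ a y := by
        intro w hw
        have hwn : w < n := Finset.mem_range.1 (hT hw)
        calc b w ≤ b (n-1) := hb w (n-1) (by omega) (by omega)
          _ ≤ a (n-1) := hab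
          _ ≤ a y := ha y (n-1) (by omega) (by omega)
      have hswap := lf_swapA a b S T x y hxS hyS h1 h2 h3 (by omega)
      set S' := insert y (S.erase x) with hS'def
      have hye : y ∉ S.erase x := fun h => hyS (Finset.mem_of_mem_erase h)
      have hS'c : S'.card = k := by
        rw [hS'def, Finset.card_insert_of_notMem hye,
          Finset.card_erase_of_mem hxS]
        have : 1 ≤ S.card := Finset.card_pos.2 ⟨x, hxS⟩
        omega
      have hS'r : S' ⊆ Finset.range n := by
        intro z hz
        rw [hS'def, Finset.mem_insert] at hz
        rcases hz with rfl | hz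
        · exact hIrange hyI
        · exact hS (Finset.mem_of_mem_erase hz)
      have hsd : S' \ I = (S \ I).erase x := by
        ext z
        simp only [hS'def, Finset.mem_sdiff, Finset.mem_insert, Finset.mem_erase]
        constructor
        · rintro ⟨rfl | ⟨hz1, hz2⟩, hzI⟩
          · exact absurd hyI hzI
          · exact ⟨hz1, hz2, hzI⟩
        · rintro ⟨hz1, hz2, hzI⟩
          exact ⟨Or.inr ⟨hz1, hz2⟩, hzI⟩
      have hmpos : 1 ≤ (S \ I).card := Finset.card_pos.2 hSne
      have hm' : (S' \ I).card + (T \ I).card = m - 1 := by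
        rw [hsd, Finset.card_erase_of_mem (Finset.mem_sdiff.2 ⟨hxS, hxI⟩)]
        omega
      have hmlt : m - 1 < m := by omega
      calc lfF a b I I ≤ lfF a b S' T :=
            IH (m-1) hmlt S' T hS'r hT hS'c hTc hm'
        _ ≤ lfF a b S T := hswap

lemma lf_min' (n c : ℕ) (hc : c < n) (a b : ℕ → ℝ)
    (ha : ∀ i j, i ≤ j → j < n → a j ≤ a i)
    (hb : ∀ i j, i ≤ j → j < n → b i ≤ b j)
    (hab : b (n-1) ≤ a (n-1))
    (S T : Finset ℕ) (hS : S ⊆ Finset.range n) (hT : T ⊆ Finset.range n)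
    (hSc : S.card = n - c) (hTc : T.card = n - c) :
    lfF a b (Finset.Icc c (n-1)) (Finset.Icc c (n-1)) ≤ lfF a b S T := by
  have h : n - (n - c) = c := by omega
  have h2 := lf_min n (n-c) (by omega) (by omega) a b ha hb hab
    ((S \ Finset.Icc (n-(n-c)) (n-1)).card + (T \ Finset.Icc (n-(n-c)) (n-1)).card)
    S T hS hT hSc hTc rfl
  rwa [h] at h2

lemma lf_reindex_pos (n : ℕ) (i : ℤ) (hi : 1 ≤ i) (hin : i ≤ (n:ℤ)) (f : ℤ → ℝ) :
    ∑ s ∈ Finset.Icc i (n:ℤ), f s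
      = ∑ j ∈ Finset.Icc (i.toNat - 1) (n - 1), f ((j:ℤ)+1) := by
  refine Finset.sum_nbij' (fun s => s.toNat - 1) (fun j => (j:ℤ)+1) ?_ ?_ ?_ ?_ ?_
  · intro s hs; rw [Finset.mem_Icc] at hs ⊢; omega
  · intro j hj; rw [Finset.mem_Icc] at hj ⊢; omega
  · intro s hs; rw [Finset.mem_Icc] at hs; omega
  · intro j hj; rw [Finset.mem_Icc] at hj; omega
  · intro s hs; rw [Finset.mem_Icc] at hs; congr 1; omega

lemma lf_reindex_neg (n : ℕ) (i : ℤ) (hi : 1 ≤ i) (hin : i ≤ (n:ℤ)) (f : ℤ → ℝ) :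
    ∑ s ∈ Finset.Icc (-(n:ℤ)) (-i), f s
      = ∑ j ∈ Finset.Icc (i.toNat - 1) (n - 1), f (-((j:ℤ)+1)) := by
  refine Finset.sum_nbij' (fun s => (-s).toNat - 1) (fun j => -((j:ℤ)+1)) ?_ ?_ ?_ ?_ ?_
  · intro s hs; rw [Finset.mem_Icc] at hs ⊢; omega
  · intro j hj; rw [Finset.mem_Icc] at hj ⊢; omega
  · intro s hs; rw [Finset.mem_Icc] at hs; omega
  · intro j hj; rw [Finset.mem_Icc] at hj; omega
  · intro s hs; rw [Finset.mem_Icc] at hs; congr 1; omega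

lemma lf_disj (n : ℕ) (i : ℤ) (hi : 1 ≤ i) :
    Disjoint (Finset.Icc i (n:ℤ)) (Finset.Icc (-(n:ℤ)) (-i)) := by
  rw [Finset.disjoint_left]
  intro s hs hs'
  rw [Finset.mem_Icc] at hs hs'
  omega

lemma lf_sum_split (n : ℕ) (i : ℤ) (hi : 1 ≤ i) (hin : i ≤ (n:ℤ)) (f : ℤ → ℝ) :
    ∑ s ∈ Finset.Icc i (n:ℤ) ∪ Finset.Icc (-(n:ℤ)) (-i), f s
      = (∑ j ∈ Finset.Icc (i.toNat - 1) (n-1), f ((j:ℤ)+1))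
        + ∑ j ∈ Finset.Icc (i.toNat - 1) (n-1), f (-((j:ℤ)+1)) := by
  rw [Finset.sum_union (lf_disj n i hi), lf_reindex_pos n i hi hin,
    lf_reindex_neg n i hi hin]

lemma lf_double (P : Finset ℤ) (h : ℤ → ℝ) :
    ∑ s ∈ P, ∑ t ∈ P, (if s ≠ t then Real.exp (h s - h t) else 0)
      = (∑ s ∈ P, Real.exp (h s)) * (∑ t ∈ P, Real.exp (-h t)) - P.card := by
  have e1 : ∀ s ∈ P, ∑ t ∈ P, (if s ≠ t then Real.exp (h s - h t) else 0)
      = (∑ t ∈ P, Real.exp (h s - h t)) - 1 := by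
    intro s hs
    have e2 : ∑ t ∈ P, (if s ≠ t then Real.exp (h s - h t) else 0)
        = ∑ t ∈ P, (Real.exp (h s - h t) - if s = t then Real.exp (h s - h t) else 0) := by
      apply Finset.sum_congr rfl
      intro t _
      by_cases hst : s = t <;> simp [hst]
    rw [e2, Finset.sum_sub_distrib, Finset.sum_ite_eq, if_pos hs, sub_self, Real.exp_zero]
  rw [Finset.sum_congr rfl e1, Finset.sum_sub_distrib]
  simp only [Finset.sum_const, nsmul_eq_mul, mul_one]
  congr 1
  rw [Finset.sum_mul]
  apply Finset.sum_congr rfl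
  intro s _
  rw [Finset.mul_sum]
  apply Finset.sum_congr rfl
  intro t _
  rw [← Real.exp_add]
  ring_nf

lemma lf_pos (P : Finset ℤ) (h : ℤ → ℝ) (s0 t0 : ℤ)
    (hs0 : s0 ∈ P) (ht0 : t0 ∈ P) (hne : s0 ≠ t0) :
    0 < ∑ s ∈ P, ∑ t ∈ P, (if s ≠ t then Real.exp (h s - h t) else 0) := by
  have hnn : ∀ s t : ℤ, 0 ≤ (if s ≠ t then Real.exp (h s - h t) else 0) := by
    intro s t
    split
    · exact (Real.exp_pos _).le
    · exact le_refl 0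
  apply Finset.sum_pos' (fun s _ => Finset.sum_nonneg fun t _ => hnn s t)
  refine ⟨s0, hs0, Finset.sum_pos' (fun t _ => hnn s0 t) ⟨t0, ht0, ?_⟩⟩
  rw [if_pos hne]
  exact Real.exp_pos _

/-- ListFold-exp consistency (conditional version).  Let
`a 0 ≥ … ≥ a (n-1) ≥ b (n-1) ≥ … ≥ b 0` (0-based: `a i = a_{i+1}`, `b i = b_{i+1}`).
Among all arrangements whose top half `(f_1,…,f_n)` is a permutation (`σ`) of the `a`'s
and whose bottom half `(f_{-1},…,f_{-n})` is a permutation (`τ`) of the `b`'s, the loss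
is minimized by the fully sorted arrangement `f* = (a_1,…,a_n,b_n,…,b_1)`. -/
theorem listFold_exp_conditional_consistency (n : ℕ) (a b : ℕ → ℝ)
    (ha : ∀ i j, i ≤ j → j < n → a j ≤ a i)
    (hb : ∀ i j, i ≤ j → j < n → b i ≤ b j)
    (hab : b (n - 1) ≤ a (n - 1))
    (σ τ : Equiv.Perm ℕ)
    (hσ : ∀ j, n ≤ j → σ j = j) (hτ : ∀ j, n ≤ j → τ j = j) :
    let gstar : ℤ → ℝ := fun s =>
      if 1 ≤ s then a (s.toNat - 1) else b ((-s).toNat - 1)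
    let g : ℤ → ℝ := fun s =>
      if 1 ≤ s then a (σ (s.toNat - 1)) else b (τ ((-s).toNat - 1))
    listFoldExpLoss n gstar ≤ listFoldExpLoss n g := by
  intro gstar g
  by_cases hn0 : n = 0
  · subst hn0
    have he : Finset.Icc (1 : ℤ) ((0:ℕ) : ℤ) = ∅ := by decide
    rw [listFoldExpLoss, listFoldExpLoss, he]
    simp
  have hn1 : 1 ≤ n := Nat.one_le_iff_ne_zero.2 hn0
  have hσr : ∀ j, j < n → σ j < n := by
    intro j hj
    by_contra hcon
    push_neg at hcon
    have h1 : σ (σ j) = σ j := hσ (σ j) hcon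
    have h2 : σ j = j := σ.injective h1
    omega
  have hτr : ∀ j, j < n → τ j < n := by
    intro j hj
    by_contra hcon
    push_neg at hcon
    have h1 : τ (τ j) = τ j := hτ (τ j) hcon
    have h2 : τ j = j := τ.injective h1
    omega
  have hg1 : ∀ j : ℕ, g ((j:ℤ)+1) = a (σ j) := by
    intro j
    show (if (1:ℤ) ≤ (j:ℤ)+1 then a (σ (((j:ℤ)+1).toNat - 1))
      else b (τ ((-((j:ℤ)+1)).toNat - 1))) = a (σ j)
    have e : ((j:ℤ)+1).toNat - 1 = j := by omega
    rw [if_pos (by omega : (1:ℤ) ≤ (j:ℤ)+1), e]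
  have hg2 : ∀ j : ℕ, g (-((j:ℤ)+1)) = b (τ j) := by
    intro j
    show (if (1:ℤ) ≤ -((j:ℤ)+1) then a (σ ((-((j:ℤ)+1)).toNat - 1))
      else b (τ ((-(-((j:ℤ)+1))).toNat - 1))) = b (τ j)
    have e : (-(-((j:ℤ)+1))).toNat - 1 = j := by omega
    rw [if_neg (by omega : ¬ (1:ℤ) ≤ -((j:ℤ)+1)), e]
  have hs1 : ∀ j : ℕ, gstar ((j:ℤ)+1) = a j := by
    intro j
    show (if (1:ℤ) ≤ (j:ℤ)+1 then a (((j:ℤ)+1).toNat - 1)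
      else b ((-((j:ℤ)+1)).toNat - 1)) = a j
    have e : ((j:ℤ)+1).toNat - 1 = j := by omega
    rw [if_pos (by omega : (1:ℤ) ≤ (j:ℤ)+1), e]
  have hs2 : ∀ j : ℕ, gstar (-((j:ℤ)+1)) = b j := by
    intro j
    show (if (1:ℤ) ≤ -((j:ℤ)+1) then a ((-((j:ℤ)+1)).toNat - 1)
      else b ((-(-((j:ℤ)+1))).toNat - 1)) = b j
    have e : (-(-((j:ℤ)+1))).toNat - 1 = j := by omega
    rw [if_neg (by omega : ¬ (1:ℤ) ≤ -((j:ℤ)+1)), e]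
  rw [listFoldExpLoss, listFoldExpLoss, Finset.sum_add_distrib, Finset.sum_add_distrib]
  have hIcc0 : Finset.Icc ((1:ℤ).toNat - 1) (n-1) = Finset.range n := by
    ext j
    rw [Finset.mem_Icc, Finset.mem_range]
    omega
  have h1n : (1:ℤ) ≤ (n:ℤ) := by exact_mod_cast hn1
  -- linear part
  have hlin : ∑ i ∈ Finset.Icc (1:ℤ) (n:ℤ), (-(gstar i - gstar (-i)))
      = ∑ i ∈ Finset.Icc (1:ℤ) (n:ℤ), (-(g i - g (-i))) := by
    have e1 : ∀ (u : ℤ → ℝ), ∑ i ∈ Finset.Icc (1:ℤ) (n:ℤ), (-(u i - u (-i)))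
        = (∑ i ∈ Finset.Icc (1:ℤ) (n:ℤ), u (-i)) - ∑ i ∈ Finset.Icc (1:ℤ) (n:ℤ), u i := by
      intro u
      rw [← Finset.sum_sub_distrib]
      apply Finset.sum_congr rfl
      intro i _
      ring
    rw [e1, e1]
    have p1 : ∑ i ∈ Finset.Icc (1:ℤ) (n:ℤ), gstar i = ∑ j ∈ Finset.range n, a j := by
      rw [lf_reindex_pos n 1 le_rfl h1n, hIcc0]
      exact Finset.sum_congr rfl fun j _ => hs1 j
    have p2 : ∑ i ∈ Finset.Icc (1:ℤ) (n:ℤ), g i = ∑ j ∈ Finset.range n, a j := by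
      rw [lf_reindex_pos n 1 le_rfl h1n, hIcc0]
      rw [Finset.sum_congr rfl fun j _ => hg1 j]
      exact Equiv.Perm.sum_comp σ (Finset.range n) a
        (fun x hx => by
          simp only [Set.mem_setOf_eq] at hx
          refine Finset.mem_coe.2 (Finset.mem_range.2 ?_)
          by_contra hcon
          exact hx (hσ x (by omega)))
    have p3 : ∑ i ∈ Finset.Icc (1:ℤ) (n:ℤ), gstar (-i) = ∑ j ∈ Finset.range n, b j := by
      rw [lf_reindex_pos n 1 le_rfl h1n (fun s => gstar (-s)), hIcc0]
      exact Finset.sum_congr rfl fun j _ => hs2 j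
    have p4 : ∑ i ∈ Finset.Icc (1:ℤ) (n:ℤ), g (-i) = ∑ j ∈ Finset.range n, b j := by
      rw [lf_reindex_pos n 1 le_rfl h1n (fun s => g (-s)), hIcc0]
      rw [Finset.sum_congr rfl fun j _ => hg2 j]
      exact Equiv.Perm.sum_comp τ (Finset.range n) b
        (fun x hx => by
          simp only [Set.mem_setOf_eq] at hx
          refine Finset.mem_coe.2 (Finset.mem_range.2 ?_)
          by_contra hcon
          exact hx (hτ x (by omega)))
    rw [p1, p2, p3, p4]
  rw [hlin]
  apply add_le_add le_rfl
  -- log part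
  apply Finset.sum_le_sum
  intro i hi
  rw [Finset.mem_Icc] at hi
  obtain ⟨hi1, hin⟩ := hi
  set c : ℕ := i.toNat - 1 with hcdef
  have hc : c < n := by omega
  set I : Finset ℕ := Finset.Icc c (n-1) with hIdef
  have hIcard : I.card = n - c := by rw [hIdef, Nat.card_Icc]; omega
  have hIrange : I ⊆ Finset.range n := by
    intro z hz
    rw [hIdef, Finset.mem_Icc] at hz
    rw [Finset.mem_range]
    omega
  set S : Finset ℕ := I.image σ with hSdef
  set T : Finset ℕ := I.image τ with hTdef
  have hScard : S.card = n - c := by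
    rw [hSdef, Finset.card_image_of_injective _ σ.injective, hIcard]
  have hTcard : T.card = n - c := by
    rw [hTdef, Finset.card_image_of_injective _ τ.injective, hIcard]
  have hSrange : S ⊆ Finset.range n := by
    intro v hv
    rw [hSdef, Finset.mem_image] at hv
    obtain ⟨j, hj, rfl⟩ := hv
    exact Finset.mem_range.2 (hσr j (Finset.mem_range.1 (hIrange hj)))
  have hTrange : T ⊆ Finset.range n := by
    intro v hv
    rw [hTdef, Finset.mem_image] at hv
    obtain ⟨j, hj, rfl⟩ := hv
    exact Finset.mem_range.2 (hτr j (Finset.mem_range.1 (hIrange hj)))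
  have hAg : ∑ s ∈ Finset.Icc i (n:ℤ) ∪ Finset.Icc (-(n:ℤ)) (-i), Real.exp (g s)
      = (∑ v ∈ S, Real.exp (a v)) + ∑ w ∈ T, Real.exp (b w) := by
    rw [lf_sum_split n i hi1 hin (fun s => Real.exp (g s))]
    congr 1
    · rw [hSdef, Finset.sum_image (fun x _ y _ h => σ.injective h)]
      exact Finset.sum_congr rfl fun j _ => by rw [hg1 j]
    · rw [hTdef, Finset.sum_image (fun x _ y _ h => τ.injective h)]
      exact Finset.sum_congr rfl fun j _ => by rw [hg2 j]
  have hBg : ∑ s ∈ Finset.Icc i (n:ℤ) ∪ Finset.Icc (-(n:ℤ)) (-i), Real.exp (-g s)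
      = (∑ v ∈ S, Real.exp (-a v)) + ∑ w ∈ T, Real.exp (-b w) := by
    rw [lf_sum_split n i hi1 hin (fun s => Real.exp (-g s))]
    congr 1
    · rw [hSdef, Finset.sum_image (fun x _ y _ h => σ.injective h)]
      exact Finset.sum_congr rfl fun j _ => by rw [hg1 j]
    · rw [hTdef, Finset.sum_image (fun x _ y _ h => τ.injective h)]
      exact Finset.sum_congr rfl fun j _ => by rw [hg2 j]
  have hAs : ∑ s ∈ Finset.Icc i (n:ℤ) ∪ Finset.Icc (-(n:ℤ)) (-i), Real.exp (gstar s)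
      = (∑ v ∈ I, Real.exp (a v)) + ∑ w ∈ I, Real.exp (b w) := by
    rw [hIdef, hcdef, lf_sum_split n i hi1 hin (fun s => Real.exp (gstar s))]
    refine congrArg₂ (· + ·) ?_ ?_
    · exact Finset.sum_congr rfl fun j _ => by rw [hs1 j]
    · exact Finset.sum_congr rfl fun j _ => by rw [hs2 j]
  have hBs : ∑ s ∈ Finset.Icc i (n:ℤ) ∪ Finset.Icc (-(n:ℤ)) (-i), Real.exp (-gstar s)
      = (∑ v ∈ I, Real.exp (-a v)) + ∑ w ∈ I, Real.exp (-b w) := by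
    rw [hIdef, hcdef, lf_sum_split n i hi1 hin (fun s => Real.exp (-gstar s))]
    refine congrArg₂ (· + ·) ?_ ?_
    · exact Finset.sum_congr rfl fun j _ => by rw [hs1 j]
    · exact Finset.sum_congr rfl fun j _ => by rw [hs2 j]
  have hDg : ∑ s ∈ Finset.Icc i (n:ℤ) ∪ Finset.Icc (-(n:ℤ)) (-i),
      ∑ t ∈ Finset.Icc i (n:ℤ) ∪ Finset.Icc (-(n:ℤ)) (-i),
        (if s ≠ t then Real.exp (g s - g t) else 0)
      = lfF a b S T - (Finset.Icc i (n:ℤ) ∪ Finset.Icc (-(n:ℤ)) (-i)).card := by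
    rw [lf_double, hAg, hBg, lfF]
  have hDs : ∑ s ∈ Finset.Icc i (n:ℤ) ∪ Finset.Icc (-(n:ℤ)) (-i),
      ∑ t ∈ Finset.Icc i (n:ℤ) ∪ Finset.Icc (-(n:ℤ)) (-i),
        (if s ≠ t then Real.exp (gstar s - gstar t) else 0)
      = lfF a b I I - (Finset.Icc i (n:ℤ) ∪ Finset.Icc (-(n:ℤ)) (-i)).card := by
    rw [lf_double, hAs, hBs, lfF]
  have hmin : lfF a b I I ≤ lfF a b S T := by
    rw [hIdef]
    exact lf_min' n c hc a b ha hb hab S T hSrange hTrange hScard hTcard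
  have hpos : 0 < ∑ s ∈ Finset.Icc i (n:ℤ) ∪ Finset.Icc (-(n:ℤ)) (-i),
      ∑ t ∈ Finset.Icc i (n:ℤ) ∪ Finset.Icc (-(n:ℤ)) (-i),
        (if s ≠ t then Real.exp (gstar s - gstar t) else 0) := by
    apply lf_pos _ _ i (-i)
    · exact Finset.mem_union_left _ (Finset.mem_Icc.2 ⟨le_rfl, hin⟩)
    · exact Finset.mem_union_right _ (Finset.mem_Icc.2 ⟨by omega, le_rfl⟩)
    · omega
  apply Real.log_le_log hpos
  rw [hDg, hDs]
  linarith
end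

section
/- Non-order-sensitivity example: with scores (5,4,1,0), the ListFold-exp loss satisfies L(1,5,4,0) < L(5,1,4,0), even though the second arrangement is obtained from the first by a swap toward the ground truth (5,4,1,0); and L(5,4,1,0) < L(1,5,4,0). (Numerically L(1,5,4,0) ≈ 4.78, L(5,1,4,0) ≈ 6.65, L(5,4,1,0) ≈ 0.65.) -/
/-- The ListFold-exp loss for `n = 2`, on scores `(f₁, f₂, f₋₂, f₋₁)`. -/
noncomputable def listFoldExpLoss4 (f1 f2 fm2 fm1 : ℝ) : ℝ :=
  (-(f1 - fm1) +
    Real.log (Real.exp (f1 - f2) + Real.exp (f2 - f1)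
      + Real.exp (f1 - fm2) + Real.exp (fm2 - f1)
      + Real.exp (f1 - fm1) + Real.exp (fm1 - f1)
      + Real.exp (f2 - fm2) + Real.exp (fm2 - f2)
      + Real.exp (f2 - fm1) + Real.exp (fm1 - f2)
      + Real.exp (fm2 - fm1) + Real.exp (fm1 - fm2))) +
  (-(f2 - fm2) + Real.log (Real.exp (f2 - fm2) + Real.exp (fm2 - f2)))

/-- Non-order-sensitivity example: with ground truth `(5,4,1,0)`,
`L(1,5,4,0) < L(5,1,4,0)` even though the latter is obtained by a swap toward the
ground truth, and `L(5,4,1,0) < L(1,5,4,0)`. -/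
theorem listFold_exp_not_order_sensitive :
    listFoldExpLoss4 1 5 4 0 < listFoldExpLoss4 5 1 4 0 ∧
    listFoldExpLoss4 5 4 1 0 < listFoldExpLoss4 1 5 4 0 := by
  have e1 := Real.exp_pos (1:ℝ)
  have em1 := Real.exp_pos (-1:ℝ)
  have e3 := Real.exp_pos (3:ℝ)
  have em3 := Real.exp_pos (-3:ℝ)
  have h13 : Real.exp (1:ℝ) < Real.exp 3 := Real.exp_lt_exp.mpr (by norm_num)
  have hm1 : Real.exp (-1:ℝ) < 1 := Real.exp_lt_one_iff.mpr (by norm_num)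
  have h14 : Real.exp (1:ℝ) < 4 := by
    have := Real.exp_one_lt_d9; linarith
  have h34 : (8:ℝ) < Real.exp 3 := by
    have hc : Real.exp (3:ℝ) = Real.exp 1 * Real.exp 1 * Real.exp 1 := by
      rw [← Real.exp_add, ← Real.exp_add]; norm_num
    have h2 : (2:ℝ) < Real.exp 1 := by have := Real.exp_one_gt_d9; linarith
    nlinarith
  have key1 : Real.log (Real.exp (1:ℝ) + Real.exp (-1)) <
      Real.log (Real.exp (3:ℝ) + Real.exp (-3)) := by
    apply Real.log_lt_log (by positivity)
    linarith
  have key2 : Real.log (Real.exp (3:ℝ) + Real.exp (-3)) <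
      6 + Real.log (Real.exp (1:ℝ) + Real.exp (-1)) := by
    have h6 : (6:ℝ) + Real.log (Real.exp (1:ℝ) + Real.exp (-1)) =
        Real.log (Real.exp (6:ℝ) * (Real.exp (1:ℝ) + Real.exp (-1))) := by
      rw [Real.log_mul (by positivity) (by positivity), Real.log_exp]
    rw [h6]
    apply Real.log_lt_log (by positivity)
    have a1 : Real.exp (6:ℝ) * Real.exp (1:ℝ) = Real.exp (7:ℝ) := by
      rw [← Real.exp_add]; norm_num
    have a2 : Real.exp (6:ℝ) * Real.exp (-1:ℝ) = Real.exp (5:ℝ) := by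
      rw [← Real.exp_add]; norm_num
    have b1 : Real.exp (3:ℝ) < Real.exp (7:ℝ) := Real.exp_lt_exp.mpr (by norm_num)
    have b2 : Real.exp (-3:ℝ) < Real.exp (5:ℝ) := Real.exp_lt_exp.mpr (by norm_num)
    nlinarith [Real.exp_pos (6:ℝ)]
  have hsum : Real.log (Real.exp ((1:ℝ) - 5) + Real.exp (5 - 1)
      + Real.exp (1 - 4) + Real.exp (4 - 1)
      + Real.exp (1 - 0) + Real.exp (0 - 1)
      + Real.exp (5 - 4) + Real.exp (4 - 5)
      + Real.exp (5 - 0) + Real.exp (0 - 5)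
      + Real.exp (4 - 0) + Real.exp (0 - 4)) =
      Real.log (Real.exp ((5:ℝ) - 1) + Real.exp (1 - 5)
      + Real.exp (5 - 4) + Real.exp (4 - 5)
      + Real.exp (5 - 0) + Real.exp (0 - 5)
      + Real.exp (1 - 4) + Real.exp (4 - 1)
      + Real.exp (1 - 0) + Real.exp (0 - 1)
      + Real.exp (4 - 0) + Real.exp (0 - 4)) := by ring_nf
  have hsum2 : Real.log (Real.exp ((5:ℝ) - 4) + Real.exp (4 - 5)
      + Real.exp (5 - 1) + Real.exp (1 - 5)
      + Real.exp (5 - 0) + Real.exp (0 - 5)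
      + Real.exp (4 - 1) + Real.exp (1 - 4)
      + Real.exp (4 - 0) + Real.exp (0 - 4)
      + Real.exp (1 - 0) + Real.exp (0 - 1)) =
      Real.log (Real.exp ((1:ℝ) - 5) + Real.exp (5 - 1)
      + Real.exp (1 - 4) + Real.exp (4 - 1)
      + Real.exp (1 - 0) + Real.exp (0 - 1)
      + Real.exp (5 - 4) + Real.exp (4 - 5)
      + Real.exp (5 - 0) + Real.exp (0 - 5)
      + Real.exp (4 - 0) + Real.exp (0 - 4)) := by ring_nf
  constructor
  · unfold listFoldExpLoss4
    rw [hsum]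
    have : ((5:ℝ) - 4) = 1 := by norm_num
    norm_num at key1 ⊢
    ring_nf at key1 ⊢
    linarith
  · unfold listFoldExpLoss4
    rw [hsum2]
    norm_num at key2 ⊢
    ring_nf at key2 ⊢
    linarith
end

section
/- Vase-model/plank probability identity: for positive widths w_1,...,w_{2n} with lengths l_i = 1/w_i, the product Π_{i=1}^{n} (w_{A_i}·l_{B_i}) / [(Σ_{j=i}^{n}(w_{A_j}+w_{B_j}))·(Σ_{j=i}^{n}(l_{A_j}+l_{B_j})) - 2(n+1-i)] equals the ListFold-exp probability Π_{i=1}^{n} e^{f_{A_i} - f_{B_i}} / Σ_{s ≠ t remaining at step i} e^{f_s - f_t}, where f_i = log w_i. -/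
/-- Vase-model/plank probability identity.  For positive widths `w` with lengths
`l i = 1/w i`, and an arrangement `A_1,…,A_n,B_n,…,B_1` of indices (0-based: `A j`, `B j`
for `j < n`; positions `p < n` hold `A p` and positions `n ≤ p < 2n` hold `B (p - n)`),
the plank probability equals the ListFold-exp probability with scores `f i = log (w i)`:
at (0-based) step `i` the remaining positions are `{i,…,n-1} ∪ {n+i,…,2n-1}` and
`2(n-i)` planks remain. -/
theorem vase_model_plank_identity (n : ℕ) (w : ℕ → ℝ) (hw : ∀ i, 0 < w i)
    (A B : ℕ → ℕ) :
    let l : ℕ → ℝ := fun i => 1 / w i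
    let f : ℕ → ℝ := fun i => Real.log (w i)
    let h : ℕ → ℝ := fun p => if p < n then f (A p) else f (B (p - n))
    ∏ i ∈ Finset.range n,
        (w (A i) * l (B i)) /
          ((∑ j ∈ Finset.Icc i (n-1), (w (A j) + w (B j)))
            * (∑ j ∈ Finset.Icc i (n-1), (l (A j) + l (B j)))
            - 2 * ((n : ℝ) - i))
      = ∏ i ∈ Finset.range n,
          Real.exp (f (A i) - f (B i)) /
            (∑ s ∈ Finset.Icc i (n-1) ∪ Finset.Icc (n+i) (2*n-1),
              ∑ t ∈ Finset.Icc i (n-1) ∪ Finset.Icc (n+i) (2*n-1),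
                if s ≠ t then Real.exp (h s - h t) else 0) := by
  intro l f h
  apply Finset.prod_congr rfl
  intro i hi
  have hin : i < n := Finset.mem_range.mp hi
  have hn : 1 ≤ n := Nat.one_le_of_lt (Nat.lt_of_le_of_lt (Nat.zero_le i) hin)
  set S : Finset ℕ := Finset.Icc i (n-1) ∪ Finset.Icc (n+i) (2*n-1) with hS
  have hdisj : Disjoint (Finset.Icc i (n-1)) (Finset.Icc (n+i) (2*n-1)) := by
    rw [Finset.disjoint_left]
    intro a ha hb
    simp only [Finset.mem_Icc] at ha hb
    omega
  -- numerator
  have hnum : Real.exp (f (A i) - f (B i)) = w (A i) * l (B i) := by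
    simp only [f, l, Real.exp_sub, Real.exp_log (hw _)]
    ring
  -- value of h on the two parts
  have hmap : Finset.Icc (n+i) (2*n-1)
      = (Finset.Icc i (n-1)).map (addLeftEmbedding n) := by
    rw [Finset.map_add_left_Icc]
    congr 1
    omega
  have hSw : ∑ s ∈ S, Real.exp (h s)
      = ∑ j ∈ Finset.Icc i (n-1), (w (A j) + w (B j)) := by
    rw [hS, Finset.sum_union hdisj, hmap, Finset.sum_map, Finset.sum_add_distrib]
    congr 1
    · apply Finset.sum_congr rfl
      intro x hx
      simp only [Finset.mem_Icc] at hx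
      have : x < n := by omega
      simp [h, f, this, Real.exp_log (hw _)]
    · apply Finset.sum_congr rfl
      intro x hx
      have hx' : ¬ (n + x < n) := by omega
      show Real.exp (if n + x < n then f (A (n + x)) else f (B (n + x - n))) = w (B x)
      rw [if_neg hx', Nat.add_sub_cancel_left]
      exact Real.exp_log (hw _)
  have hSl : ∑ s ∈ S, Real.exp (-(h s))
      = ∑ j ∈ Finset.Icc i (n-1), (l (A j) + l (B j)) := by
    rw [hS, Finset.sum_union hdisj, hmap, Finset.sum_map, Finset.sum_add_distrib]
    congr 1
    · apply Finset.sum_congr rfl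
      intro x hx
      simp only [Finset.mem_Icc] at hx
      have hx' : x < n := by omega
      show Real.exp (-(if x < n then f (A x) else f (B (x - n)))) = l (A x)
      rw [if_pos hx']
      simp only [f, l, Real.exp_neg, Real.exp_log (hw _), one_div]
    · apply Finset.sum_congr rfl
      intro x hx
      have hx' : ¬ (n + x < n) := by omega
      show Real.exp (-(if n + x < n then f (A (n + x)) else f (B (n + x - n)))) = l (B x)
      rw [if_neg hx', Nat.add_sub_cancel_left]
      simp only [f, l, Real.exp_neg, Real.exp_log (hw _), one_div]
  have hcard : (S.card : ℝ) = 2 * ((n : ℝ) - i) := by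
    rw [hS, Finset.card_union_of_disjoint hdisj, Nat.card_Icc, Nat.card_Icc]
    have : (n - 1 + 1 - i) + (2*n - 1 + 1 - (n+i)) = 2 * (n - i) := by omega
    rw [this]
    push_cast [Nat.le_of_lt hin]
    ring
  have hdenom : ∑ s ∈ S, ∑ t ∈ S, (if s ≠ t then Real.exp (h s - h t) else 0)
      = (∑ j ∈ Finset.Icc i (n-1), (w (A j) + w (B j)))
        * (∑ j ∈ Finset.Icc i (n-1), (l (A j) + l (B j)))
        - 2 * ((n : ℝ) - i) := by
    have step : ∀ s ∈ S, ∑ t ∈ S, (if s ≠ t then Real.exp (h s - h t) else 0)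
        = (∑ t ∈ S, Real.exp (h s - h t)) - 1 := by
      intro s hs
      have : ∀ t, (if s ≠ t then Real.exp (h s - h t) else 0)
          = Real.exp (h s - h t) - (if s = t then Real.exp (h s - h t) else 0) := by
        intro t
        by_cases hst : s = t <;> simp [hst]
      rw [Finset.sum_congr rfl (fun t _ => this t), Finset.sum_sub_distrib,
        Finset.sum_ite_eq S s (fun t => Real.exp (h s - h t)), if_pos hs]
      simp
    rw [Finset.sum_congr rfl step, Finset.sum_sub_distrib]
    have : ∀ s ∈ S, (∑ t ∈ S, Real.exp (h s - h t))
        = Real.exp (h s) * ∑ t ∈ S, Real.exp (-(h t)) := by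
      intro s _
      rw [Finset.mul_sum]
      exact Finset.sum_congr rfl fun t _ => by rw [← Real.exp_add]; ring_nf
    rw [Finset.sum_congr rfl this, ← Finset.sum_mul, hSw, hSl]
    simp [hcard]
  rw [hnum, hdenom]
end

section
/- ListFold-exp loss difference when inserting α into the top half (case a_{i+1} ≤ α ≤ a_i): with the notation Δℓ_k = ℓ(S_k^α) - ℓ(S_k), the total loss difference between placing α at rank position i+1 among the a's versus at the very top satisfies Δ L = Σ_{k=1}^{i} Δℓ_k ≤ 0, where ℓ(S) = log((Σ_{s∈S} e^{f_s})(Σ_{s∈S} e^{-f_s}) - |S|) and S_k^α = S_k \ {a_k} ∪ {α}. -/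
/-!
Write `S_k = a_k ::ₘ T_k`, so that `Δℓ_k ≤ 0` says that replacing the element `a_k` of `S_k`
by the smaller `α` does not increase `ℓ`. With `P = Σ_{t∈T} e^t` and `Q = Σ_{t∈T} e^{-t}`, the
argument of the logarithm in `ℓ(x ::ₘ T)` is `PQ - |T| + (e^x Q + e^{-x} P)`, and for `y ≤ x`
the bracket is larger at `x` than at `y` as soon as `P ≤ e^{x+y} Q`. For `x = a_k`, `y = α` this
follows by pairing the elements of `T_k`: `a_j` with `b_j` for `j > k`, and `b_k` with itself;
each pair `(u, v)` has `u + v ≤ a_k + α`, whence `e^u ≤ e^{a_k+α} e^{-v}`.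
-/

/-- `ℓ(S) = log((Σ_{s∈S} e^{f_s})(Σ_{s∈S} e^{-f_s}) - |S|)` for a multiset `S` of reals. -/
noncomputable def ellLoss (M : Multiset ℝ) : ℝ :=
  Real.log ((M.map Real.exp).sum * (M.map fun x => Real.exp (-x)).sum - Multiset.card M)

open Real

lemma card_le_sum_exp_mul_sum_exp_neg (T : Multiset ℝ) :
    (Multiset.card T : ℝ) ≤ (T.map exp).sum * (T.map fun t => exp (-t)).sum := by
  induction T using Multiset.induction with
  | empty => simp
  | cons t T ih =>
    have hP : 0 ≤ (T.map exp).sum := Multiset.sum_nonneg (by simp [exp_nonneg])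
    have hQ : 0 ≤ (T.map fun t => exp (-t)).sum := Multiset.sum_nonneg (by simp [exp_nonneg])
    have hinv : exp t * exp (-t) = 1 := by rw [← exp_add, add_neg_cancel, exp_zero]
    simp only [Multiset.map_cons, Multiset.sum_cons, Multiset.card_cons, Nat.cast_succ]
    nlinarith [mul_nonneg (exp_pos t).le hQ, mul_nonneg (exp_pos (-t)).le hP]

lemma sum_exp_cons_mul_sum_exp_neg_cons_sub_card (x : ℝ) (T : Multiset ℝ) :
    ((x ::ₘ T).map exp).sum * ((x ::ₘ T).map fun t => exp (-t)).sum - Multiset.card (x ::ₘ T)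
      = ((T.map exp).sum * (T.map fun t => exp (-t)).sum - Multiset.card T)
        + (exp x * (T.map fun t => exp (-t)).sum + exp (-x) * (T.map exp).sum) := by
  have hinv : exp x * exp (-x) = 1 := by rw [← exp_add, add_neg_cancel, exp_zero]
  simp only [Multiset.map_cons, Multiset.sum_cons, Multiset.card_cons, Nat.cast_succ]
  linear_combination hinv

lemma exp_mul_add_exp_neg_mul_le {x y P Q : ℝ} (hxy : y ≤ x) (hPQ : P ≤ exp (x + y) * Q) :
    exp y * Q + exp (-y) * P ≤ exp x * Q + exp (-x) * P := by
  have hexp : exp x - exp y = (exp (-y) - exp (-x)) * exp (x + y) := by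
    rw [sub_mul, ← exp_add, ← exp_add]; ring_nf
  have hneg : 0 ≤ exp (-y) - exp (-x) := sub_nonneg.mpr (exp_le_exp.mpr (by linarith))
  have hdiff : (exp x * Q + exp (-x) * P) - (exp y * Q + exp (-y) * P)
      = (exp (-y) - exp (-x)) * (exp (x + y) * Q - P) := by
    linear_combination Q * hexp
  linarith [mul_nonneg hneg (sub_nonneg.mpr hPQ)]

lemma ellLoss_cons_le_ellLoss_cons {T : Multiset ℝ} (hT : T ≠ 0) {x y : ℝ} (hxy : y ≤ x)
    (hPQ : (T.map exp).sum ≤ exp (x + y) * (T.map fun t => exp (-t)).sum) :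
    ellLoss (y ::ₘ T) ≤ ellLoss (x ::ₘ T) := by
  have hQ : 0 < (T.map fun t => exp (-t)).sum := by
    obtain ⟨t, ht⟩ := Multiset.exists_mem_of_ne_zero hT
    exact (exp_pos (-t)).trans_le
      (Multiset.single_le_sum (by simp [exp_nonneg]) _ (Multiset.mem_map_of_mem _ ht))
  have hP : 0 ≤ (T.map exp).sum := Multiset.sum_nonneg (by simp [exp_nonneg])
  unfold ellLoss
  rw [sum_exp_cons_mul_sum_exp_neg_cons_sub_card, sum_exp_cons_mul_sum_exp_neg_cons_sub_card]
  refine log_le_log ?_ (by linarith [exp_mul_add_exp_neg_mul_le hxy hPQ])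
  nlinarith [card_le_sum_exp_mul_sum_exp_neg T, mul_pos (exp_pos y) hQ,
    mul_nonneg (exp_pos (-y)).le hP]

lemma exp_le_exp_mul_exp_neg {u v c : ℝ} (h : u + v ≤ c) : exp u ≤ exp c * exp (-v) := by
  rw [← exp_add]; exact exp_le_exp.mpr (by linarith)

lemma sum_exp_le_exp_mul_sum_exp_neg_of_pairing {ι : Type*} (s : Finset ι) (u v : ι → ℝ)
    {t c : ℝ} (ht : t + t ≤ c) (huv : ∀ j ∈ s, u j + v j ≤ c) :
    ((t ::ₘ (s.val.map u + s.val.map v)).map exp).sum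
      ≤ exp c * ((t ::ₘ (s.val.map u + s.val.map v)).map fun x => exp (-x)).sum := by
  simp only [Multiset.map_cons, Multiset.sum_cons, Multiset.map_add, Multiset.sum_add,
    Multiset.map_map, Function.comp_def, ← Finset.sum_eq_multiset_sum, mul_add, Finset.mul_sum]
  have hu : ∑ j ∈ s, exp (u j) ≤ ∑ j ∈ s, exp c * exp (-v j) :=
    Finset.sum_le_sum fun j hj => exp_le_exp_mul_exp_neg (huv j hj)
  have hv : ∑ j ∈ s, exp (v j) ≤ ∑ j ∈ s, exp c * exp (-u j) :=
    Finset.sum_le_sum fun j hj => exp_le_exp_mul_exp_neg (by linarith [huv j hj])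
  linarith [exp_le_exp_mul_exp_neg ht]

lemma map_Icc_val_eq_cons {k n : ℕ} (hkn : k ≤ n) {β : Type*} (f : ℕ → β) :
    (Finset.Icc k n).val.map f = f k ::ₘ (Finset.Icc (k + 1) n).val.map f := by
  rw [Finset.Icc_eq_cons_Ioc hkn, Finset.cons_val, Multiset.map_cons,
    Finset.Icc_add_one_left_eq_Ioc]

theorem listFold_exp_insert_top_half_general (n i : ℕ) (a b : ℕ → ℝ) (α : ℝ)
    (ha : ∀ j k, 1 ≤ j → j ≤ k → k ≤ n → a k ≤ a j)
    (hb : ∀ j k, 1 ≤ j → j ≤ k → k ≤ n → b j ≤ b k)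
    (hab : b n ≤ a n) (hi2 : i ≤ n)
    (hα₂ : α ≤ a i)
    (hα₁ : if i = n then b n ≤ α else a (i + 1) ≤ α) :
    ∑ k ∈ Finset.Icc 1 i,
      (ellLoss (α ::ₘ ((Finset.Icc (k+1) n).val.map a + (Finset.Icc k n).val.map b))
        - ellLoss ((Finset.Icc k n).val.map a + (Finset.Icc k n).val.map b)) ≤ 0 := by
  have hbα : b n ≤ α := by
    split_ifs at hα₁ with hin
    · exact hα₁
    · exact (hab.trans (ha (i + 1) n (by omega) (by omega) le_rfl)).trans hα₁
  refine Finset.sum_nonpos fun k hk => sub_nonpos.mpr ?_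
  obtain ⟨hk1, hki⟩ := Finset.mem_Icc.mp hk
  have hkn : k ≤ n := hki.trans hi2
  have hbk : b k ≤ b n := hb k n hk1 hkn le_rfl
  rw [map_Icc_val_eq_cons hkn a, Multiset.cons_add, map_Icc_val_eq_cons hkn b, Multiset.add_cons]
  refine ellLoss_cons_le_ellLoss_cons Multiset.cons_ne_zero (hα₂.trans (ha k i hk1 hki hi2))
    (sum_exp_le_exp_mul_sum_exp_neg_of_pairing _ a b ?_ fun j hj => ?_)
  · linarith [ha k n hk1 hkn le_rfl, hα₂.trans (ha k i hk1 hki hi2)]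
  · obtain ⟨hkj, hjn⟩ := Finset.mem_Icc.mp hj
    linarith [ha k j hk1 (by omega) hjn, hb j n (by omega) hjn le_rfl]

/-- ListFold-exp loss difference when inserting `α` into the top half.  With
`a 1 ≥ … ≥ a n ≥ b n ≥ … ≥ b 1` (1-based), `S_k = {a_k,…,a_n,b_n,…,b_k}` and
`S_k^α = S_k ∖ {a_k} ∪ {α}`, if `a_{i+1} ≤ α ≤ a_i` (with `a_{n+1} := b n`), then
`ΔL = Σ_{k=1}^{i} (ℓ(S_k^α) - ℓ(S_k)) ≤ 0`. -/
theorem listFold_exp_insert_top_half (n i : ℕ) (a b : ℕ → ℝ) (α : ℝ)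
    (ha : ∀ j k, 1 ≤ j → j ≤ k → k ≤ n → a k ≤ a j)
    (hb : ∀ j k, 1 ≤ j → j ≤ k → k ≤ n → b j ≤ b k)
    (hab : b n ≤ a n) (hi1 : 1 ≤ i) (hi2 : i ≤ n)
    (hα₂ : α ≤ a i)
    (hα₁ : if i = n then b n ≤ α else a (i + 1) ≤ α) :
    ∑ k ∈ Finset.Icc 1 i,
      (ellLoss (α ::ₘ ((Finset.Icc (k+1) n).val.map a + (Finset.Icc k n).val.map b))
        - ellLoss ((Finset.Icc k n).val.map a + (Finset.Icc k n).val.map b)) ≤ 0 :=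
  listFold_exp_insert_top_half_general n i a b α ha hb hab hi2 hα₂ hα₁
end
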